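/- arXiv:1108.4637 — 4 statements merged into one kernel-verified Lean document; each statement's English description precedes it below -/
import Mathlib

section
/- Let 𝔉 be a closed subset of ℂ and let f : 𝔉 → ℂ be continuous. The following are equivalent (quantifying over all complex Hilbert spaces): (i) ‖f(N)R − Rf(N)‖ ≤ ‖NR − RN‖ for every bounded normal operator N with spectrum contained in 𝔉 and every bounded operator R; (ii) ‖f(N₁)R − Rf(N₂)‖ ≤ ‖N₁R − RN₂‖ for all bounded normal operators N₁, N₂ with spectra contained in 𝔉 and every bounded operator R. -/
/-!
Let `N = diag(N₁, N₂)` act on `H ⊕ H` and put `R` in the upper right corner,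
`R̃ = [[0, R], [0, 0]]`. Then `N` is normal with spectrum inside `σ(N₁) ∪ σ(N₂)`,
`f(N) = diag(f(N₁), f(N₂))` and `N R̃ - R̃ N = [[0, N₁ R - R N₂], [0, 0]]`. As the corner embedding
is isometric, the commutator estimate for `(N, R̃)` is the quasicommutator estimate for
`(N₁, N₂, R)`. The converse is the case `N₁ = N₂`.
-/

open ContinuousLinearMap WithLp

instance Prod.isStarNormal {A B : Type*} [Mul A] [Star A] [Mul B] [Star B] (a : A) (b : B)
    [IsStarNormal a] [IsStarNormal b] : IsStarNormal (a, b) :=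
  ⟨Commute.prod (star_comm_self' a) (star_comm_self' b)⟩

section BlockOperators

variable {H K : Type*} [NormedAddCommGroup H] [InnerProductSpace ℂ H]
  [NormedAddCommGroup K] [InnerProductSpace ℂ K]

noncomputable def offDiag (X : K →L[ℂ] H) : WithLp 2 (H × K) →L[ℂ] WithLp 2 (H × K) :=
  (prodContinuousLinearEquiv 2 ℂ H K).symm.toContinuousLinearMap ∘L inl ℂ H K ∘L X ∘L
    sndL 2 ℂ H K

lemma offDiag_apply (X : K →L[ℂ] H) (x : WithLp 2 (H × K)) :
    offDiag X x = toLp 2 (X x.snd, 0) := rfl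

lemma norm_offDiag (X : K →L[ℂ] H) : ‖offDiag X‖ = ‖X‖ := by
  refine le_antisymm (opNorm_le_bound _ (norm_nonneg X) fun x => ?_)
    (opNorm_le_bound _ (norm_nonneg (offDiag X)) fun y => ?_)
  · calc ‖offDiag X x‖ = ‖X x.snd‖ := by rw [offDiag_apply, norm_toLp_fst]
      _ ≤ ‖X‖ * ‖x.snd‖ := X.le_opNorm _
      _ ≤ ‖X‖ * ‖x‖ := by gcongr; exact WithLp.norm_snd_le _ x
  · calc ‖X y‖ = ‖offDiag X (toLp 2 (0, y))‖ := by rw [offDiag_apply, norm_toLp_fst]; rfl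
      _ ≤ ‖offDiag X‖ * ‖toLp 2 ((0 : H), y)‖ := le_opNorm _ _
      _ = ‖offDiag X‖ * ‖y‖ := by rw [norm_toLp_snd]

variable [CompleteSpace H] [CompleteSpace K]

noncomputable def blockDiag :
    (H →L[ℂ] H) × (K →L[ℂ] K) →⋆ₐ[ℂ] (WithLp 2 (H × K) →L[ℂ] WithLp 2 (H × K)) where
  toFun p := (prodContinuousLinearEquiv 2 ℂ H K).symm.toContinuousLinearMap ∘L
    prodMapL ℂ H H K K p ∘L (prodContinuousLinearEquiv 2 ℂ H K).toContinuousLinearMap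
  map_one' := by ext x; simp
  map_mul' p q := by ext x; simp [Prod.map]
  map_zero' := by ext x; simp [Prod.map]
  map_add' p q := by ext x; simp [Prod.map]; rfl
  commutes' z := by ext x; simp [Prod.map, Algebra.algebraMap_eq_smul_one]; rfl
  map_star' p := by
    simp only [star_eq_adjoint]
    rw [eq_adjoint_iff]
    intro x y
    simp [prod_inner_apply, star_eq_adjoint, adjoint_inner_left]

lemma blockDiag_apply (p : (H →L[ℂ] H) × (K →L[ℂ] K)) (x : WithLp 2 (H × K)) :
    blockDiag p x = toLp 2 (p.1 x.fst, p.2 x.snd) := rfl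

lemma continuous_blockDiag : Continuous (blockDiag : (H →L[ℂ] H) × (K →L[ℂ] K) → _) := by
  show Continuous fun p => _ ∘L prodMapL ℂ H H K K p ∘L _
  fun_prop

lemma spectrum_blockDiag_subset (a : H →L[ℂ] H) (b : K →L[ℂ] K) :
    spectrum ℂ (blockDiag (a, b)) ⊆ spectrum ℂ a ∪ spectrum ℂ b :=
  Prod.spectrum_eq (R := ℂ) a b ▸ AlgHom.spectrum_apply_subset blockDiag.toAlgHom (a, b)

lemma cfc_blockDiag (f : ℂ → ℂ) (a : H →L[ℂ] H) (b : K →L[ℂ] K) [IsStarNormal a]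
    [IsStarNormal b] (hf : ContinuousOn f (spectrum ℂ a ∪ spectrum ℂ b)) :
    cfc f (blockDiag (a, b)) = blockDiag (cfc f a, cfc f b) := by
  rw [← cfc_map_prod (S := ℂ) f a b hf,
    blockDiag.map_cfc f (a, b) (by rwa [Prod.spectrum_eq]) continuous_blockDiag]

lemma blockDiag_mul_offDiag_sub (a : H →L[ℂ] H) (b : K →L[ℂ] K) (X : K →L[ℂ] H) :
    blockDiag (a, b) * offDiag X - offDiag X * blockDiag (a, b) = offDiag (a ∘L X - X ∘L b) := by
  ext x
  simp [blockDiag_apply, offDiag_apply, ← toLp_sub]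

lemma norm_blockDiag_mul_offDiag_sub (a : H →L[ℂ] H) (b : K →L[ℂ] K) (X : K →L[ℂ] H) :
    ‖blockDiag (a, b) * offDiag X - offDiag X * blockDiag (a, b)‖ = ‖a ∘L X - X ∘L b‖ := by
  rw [blockDiag_mul_offDiag_sub, norm_offDiag]

end BlockOperators

theorem stmt_1_general (F : Set ℂ) (f : ℂ → ℂ) (hf : ContinuousOn f F) :
    (∀ (H : Type) [NormedAddCommGroup H] [InnerProductSpace ℂ H] [CompleteSpace H]
      (N R : H →L[ℂ] H), IsStarNormal N → spectrum ℂ N ⊆ F →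
      ‖cfc f N * R - R * cfc f N‖ ≤ ‖N * R - R * N‖)
    ↔
    (∀ (H : Type) [NormedAddCommGroup H] [InnerProductSpace ℂ H] [CompleteSpace H]
      (N₁ N₂ R : H →L[ℂ] H), IsStarNormal N₁ → IsStarNormal N₂ →
      spectrum ℂ N₁ ⊆ F → spectrum ℂ N₂ ⊆ F →
      ‖cfc f N₁ * R - R * cfc f N₂‖ ≤ ‖N₁ * R - R * N₂‖) := by
  refine ⟨fun h H _ _ _ N₁ N₂ R hN₁ hN₂ hs₁ hs₂ => ?_,
    fun h H _ _ _ N R hN hs => h H N N R hN hN hs hs⟩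
  have hs : spectrum ℂ N₁ ∪ spectrum ℂ N₂ ⊆ F := Set.union_subset hs₁ hs₂
  have key := h _ (blockDiag (N₁, N₂)) (offDiag R) inferInstance
    ((spectrum_blockDiag_subset N₁ N₂).trans hs)
  rwa [cfc_blockDiag f N₁ N₂ (hf.mono hs), norm_blockDiag_mul_offDiag_sub,
    norm_blockDiag_mul_offDiag_sub] at key

/-- Theorem 3.2 (Theorem `sr0`): for a continuous function `f` on a closed subset `F` of `ℂ`,
the commutator estimate for a single normal operator is equivalent to the
quasicommutator estimate for pairs of normal operators. -/
theorem stmt_1 (F : Set ℂ) (hF : IsClosed F) (f : ℂ → ℂ) (hf : ContinuousOn f F) :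
    (∀ (H : Type) [NormedAddCommGroup H] [InnerProductSpace ℂ H] [CompleteSpace H]
      (N R : H →L[ℂ] H), IsStarNormal N → spectrum ℂ N ⊆ F →
      ‖cfc f N * R - R * cfc f N‖ ≤ ‖N * R - R * N‖)
    ↔
    (∀ (H : Type) [NormedAddCommGroup H] [InnerProductSpace ℂ H] [CompleteSpace H]
      (N₁ N₂ R : H →L[ℂ] H), IsStarNormal N₁ → IsStarNormal N₂ →
      spectrum ℂ N₁ ⊆ F → spectrum ℂ N₂ ⊆ F →
      ‖cfc f N₁ * R - R * cfc f N₂‖ ≤ ‖N₁ * R - R * N₂‖) :=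
  stmt_1_general F f hf
end

section
/- For n ∈ ℤ define h_n : ℂ → ℂ by h_n(ζ) = ζ^{n+1}/ζ̄^n for ζ ≠ 0 and h_n(0) = 0. Then: (a) ‖h_n(N₁) − h_n(N₂)‖ ≤ |2n+1|·‖N₁ − N₂‖ for all bounded normal operators N₁, N₂ on any complex Hilbert space; (b) the best Lipschitz constant of h_n on ℂ equals |2n+1|, i.e., |h_n(ζ₁) − h_n(ζ₂)| ≤ |2n+1|·|ζ₁ − ζ₂| for all ζ₁, ζ₂ ∈ ℂ and no smaller constant works; (c) if n ∉ {0, −1}, then h_n is not (real-)differentiable at the origin as a map from ℝ² ≅ ℂ to ℂ. -/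
/-!
On the unit circle `h_n` is `e^{iθ} ↦ e^{i(2n+1)θ}`, so no Lipschitz constant can be smaller
than `|2n+1|`. Since `h_n` is real-homogeneous of degree one, differentiability at `0` would
make it `ℝ`-linear; adding its values at `e^{±iθ}` would then give `cos((2n+1)θ) = cos θ`,
which fails at `θ = π/(2n+1)` as soon as `|2n+1| ≥ 3`.

The operator estimate contains the scalar one, `ℂ` being a C⋆-algebra, and the case
`n = -m-1` follows from `n = m ≥ 0` because `h_{-m-1} = conj ∘ h_m`. Write
`h_m(ζ) = (ζ/ζ̄)^m ζ` and replace the discontinuous phase `ζ/ζ̄` by the continuous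
`ζ²/(|ζ|²+δ²)`. If `u`, `v` are this function of the normal elements `a`, `b`, a telescoping
identity bounds `‖u^m a - b v^m‖` by `(2m+1)‖a - b‖` up to errors `O(mδ)` coming from
`a ≈ u a*` and `b ≈ b* v`; then let `δ → 0`.
-/

open scoped ComplexConjugate

/-- The function `h_n(ζ) = ζ^{n+1} / ζ̄^n` (with `h_n(0) = 0`). -/
noncomputable def hFun (n : ℤ) (ζ : ℂ) : ℂ :=
  if ζ = 0 then 0 else ζ ^ (n + 1) / (conj ζ) ^ n

open Complex

lemma hFun_zero (n : ℤ) : hFun n 0 = 0 := if_pos rfl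

lemma hFun_of_ne_zero (n : ℤ) {ζ : ℂ} (h : ζ ≠ 0) : hFun n ζ = ζ ^ (n + 1) / conj ζ ^ n :=
  if_neg h

lemma norm_hFun (n : ℤ) (ζ : ℂ) : ‖hFun n ζ‖ = ‖ζ‖ := by
  rcases eq_or_ne ζ 0 with rfl | h
  · simp [hFun_zero]
  · have h' : ‖ζ‖ ≠ 0 := norm_ne_zero_iff.mpr h
    rw [hFun_of_ne_zero n h, norm_div, norm_zpow, norm_zpow, norm_conj, zpow_add_one₀ h',
      mul_div_cancel_left₀ _ (zpow_ne_zero n h')]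

lemma hFun_neg_sub_one (n : ℤ) (ζ : ℂ) : hFun (-n - 1) ζ = conj (hFun n ζ) := by
  rcases eq_or_ne ζ 0 with rfl | h
  · simp [hFun_zero]
  · have hc : conj ζ ≠ 0 := (map_ne_zero _).mpr h
    rw [hFun_of_ne_zero _ h, hFun_of_ne_zero _ h, map_div₀, map_zpow₀, map_zpow₀, conj_conj,
      div_eq_div_iff (zpow_ne_zero _ hc) (zpow_ne_zero _ h), ← zpow_add₀ hc, ← zpow_add₀ h]
    ring_nf
    simp

lemma hFun_one (n : ℤ) : hFun n 1 = 1 := by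
  simp [hFun_of_ne_zero n one_ne_zero]

lemma hFun_natCast (m : ℕ) (ζ : ℂ) : hFun m ζ = (ζ / conj ζ) ^ m * ζ := by
  rcases eq_or_ne ζ 0 with rfl | h
  · simp [hFun_zero]
  · rw [hFun_of_ne_zero _ h, div_pow, zpow_add_one₀ h, zpow_natCast, zpow_natCast]
    ring

lemma continuous_hFun (n : ℤ) : Continuous (hFun n) := by
  refine continuous_iff_continuousAt.mpr fun ζ₀ => ?_
  rcases eq_or_ne ζ₀ 0 with rfl | h
  · rw [ContinuousAt, hFun_zero]
    refine squeeze_zero_norm (fun ζ => (norm_hFun n ζ).le) ?_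
    simpa using continuous_norm.tendsto (0 : ℂ)
  · have hc : conj ζ₀ ≠ 0 := (map_ne_zero _).mpr h
    have hcont : ContinuousAt (fun ζ : ℂ => ζ ^ (n + 1) / conj ζ ^ n) ζ₀ :=
      (continuousAt_zpow₀ _ _ (Or.inl h)).div
        ((continuousAt_zpow₀ _ _ (Or.inl hc)).comp continuous_conj.continuousAt)
        (zpow_ne_zero _ hc)
    refine hcont.congr ?_
    filter_upwards [isOpen_compl_singleton.mem_nhds h] with ζ hζ
    exact (hFun_of_ne_zero n hζ).symm

lemma hFun_real_smul (n : ℤ) (t : ℝ) (ζ : ℂ) : hFun n (t • ζ) = t • hFun n ζ := by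
  rcases eq_or_ne (t : ℂ) 0 with ht | ht
  · simp [ofReal_eq_zero.mp ht, hFun_zero]
  rcases eq_or_ne ζ 0 with rfl | hζ
  · simp [hFun_zero]
  rw [real_smul, real_smul, hFun_of_ne_zero n (mul_ne_zero ht hζ), hFun_of_ne_zero n hζ,
    map_mul, conj_ofReal, mul_zpow, mul_zpow, zpow_add_one₀ ht, mul_assoc,
    mul_div_mul_left _ _ (zpow_ne_zero n ht), mul_div_assoc]

lemma hFun_exp_mul_I (n : ℤ) (θ : ℝ) :
    hFun n (exp (θ * I)) = exp (((2 * n + 1) * θ : ℝ) * I) := by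
  rw [hFun_of_ne_zero n (exp_ne_zero _), ← exp_conj, map_mul, conj_ofReal, conj_I,
    ← exp_int_mul, ← exp_int_mul, ← exp_sub]
  push_cast
  ring_nf

section NormedRing

variable {R : Type*} [NormedRing R]

lemma norm_mul_le_of_norm_le_one {u : R} (hu : ‖u‖ ≤ 1) (x : R) : ‖u * x‖ ≤ ‖x‖ :=
  (norm_mul_le u x).trans (mul_le_of_le_one_left (norm_nonneg x) hu)

lemma norm_mul_pow_le_of_norm_le_one {v : R} (hv : ‖v‖ ≤ 1) (x : R) (m : ℕ) :
    ‖x * v ^ m‖ ≤ ‖x‖ := by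
  induction m with
  | zero => simp
  | succ m ih =>
    rw [pow_succ, ← mul_assoc]
    exact (norm_mul_le _ _).trans (mul_le_of_le_one_right (norm_nonneg _) hv) |>.trans ih

lemma norm_pow_mul_sub_mul_pow_le [StarRing R] [NormedStarGroup R] {u v : R} (hu : ‖u‖ ≤ 1)
    (hv : ‖v‖ ≤ 1) (x y : R) (m : ℕ) :
    ‖u ^ m * x - y * v ^ m‖ ≤
      (2 * m + 1) * ‖x - y‖ + m * (‖x - u * star x‖ + ‖y - star y * v‖) := by
  induction m with
  | zero => simp
  | succ m ih =>
    have key : u ^ (m + 1) * x - y * v ^ (m + 1) =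
        u * (u ^ m * x - y * v ^ m) + (x - y) * v ^ (m + 1)
          - u * (star x - star y) * v ^ (m + 1) - (x - u * star x) * v ^ (m + 1)
          + u * (y - star y * v) * v ^ m := by
      rw [pow_succ' u, pow_succ' v]
      noncomm_ring
    have hstar : ‖star x - star y‖ = ‖x - y‖ := by rw [← star_sub, norm_star]
    calc ‖u ^ (m + 1) * x - y * v ^ (m + 1)‖
        ≤ ‖u * (u ^ m * x - y * v ^ m)‖ + ‖(x - y) * v ^ (m + 1)‖
          + ‖u * (star x - star y) * v ^ (m + 1)‖ + ‖(x - u * star x) * v ^ (m + 1)‖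
          + ‖u * (y - star y * v) * v ^ m‖ := by
          rw [key]
          refine (norm_add_le _ _).trans (add_le_add_left ((norm_sub_le _ _).trans
            (add_le_add_left ((norm_sub_le _ _).trans
              (add_le_add_left (norm_add_le _ _) _)) _)) _)
      _ ≤ ‖u ^ m * x - y * v ^ m‖ + ‖x - y‖ + ‖x - y‖ + ‖x - u * star x‖
          + ‖y - star y * v‖ := by
          gcongr ?_ + ?_ + ?_ + ?_ + ?_
          · exact norm_mul_le_of_norm_le_one hu _
          · exact norm_mul_pow_le_of_norm_le_one hv _ _
          · exact (norm_mul_pow_le_of_norm_le_one hv _ _).trans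
              ((norm_mul_le_of_norm_le_one hu _).trans hstar.le)
          · exact norm_mul_pow_le_of_norm_le_one hv _ _
          · exact (norm_mul_pow_le_of_norm_le_one hv _ _).trans (norm_mul_le_of_norm_le_one hu _)
      _ ≤ (2 * (m + 1 : ℕ) + 1) * ‖x - y‖
          + (m + 1 : ℕ) * (‖x - u * star x‖ + ‖y - star y * v‖) := by
          push_cast
          linarith

end NormedRing

/-- A continuous substitute for the phase `ζ / conj ζ`, to which it tends away from `0`
as `δ → 0`. -/
noncomputable def phaseApprox (δ : ℝ) (ζ : ℂ) : ℂ := ζ ^ 2 / (‖ζ‖ ^ 2 + δ ^ 2 : ℝ)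

lemma phaseApprox_eq (δ : ℝ) (ζ : ℂ) :
    phaseApprox δ ζ = (‖ζ‖ ^ 2 / (‖ζ‖ ^ 2 + δ ^ 2) : ℝ) * (ζ / conj ζ) := by
  rcases eq_or_ne ζ 0 with rfl | h
  · simp [phaseApprox]
  · have hc : conj ζ ≠ 0 := (map_ne_zero _).mpr h
    rw [phaseApprox]
    push_cast
    rw [← mul_conj']
    field_simp

lemma continuous_phaseApprox {δ : ℝ} (hδ : δ ≠ 0) : Continuous (phaseApprox δ) := by
  refine (continuous_pow 2).div (by fun_prop) fun ζ => ?_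
  exact_mod_cast (by positivity : (0 : ℝ) < ‖ζ‖ ^ 2 + δ ^ 2).ne'

lemma norm_phaseApprox_le (δ : ℝ) (ζ : ℂ) : ‖phaseApprox δ ζ‖ ≤ 1 := by
  rw [phaseApprox, norm_div, norm_pow, norm_real, Real.norm_of_nonneg (by positivity)]
  exact div_le_one_of_le₀ (le_add_of_nonneg_right (sq_nonneg δ)) (by positivity)

lemma phaseApprox_mul_conj (δ : ℝ) (ζ : ℂ) :
    phaseApprox δ ζ * conj ζ = (‖ζ‖ ^ 2 / (‖ζ‖ ^ 2 + δ ^ 2) : ℝ) * ζ := by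
  rcases eq_or_ne ζ 0 with rfl | h
  · simp [phaseApprox]
  · rw [phaseApprox_eq, mul_assoc, div_mul_cancel₀ _ ((map_ne_zero _).mpr h)]

lemma phaseApprox_pow_mul (δ : ℝ) (m : ℕ) (ζ : ℂ) :
    phaseApprox δ ζ ^ m * ζ = ((‖ζ‖ ^ 2 / (‖ζ‖ ^ 2 + δ ^ 2)) ^ m : ℝ) * hFun m ζ := by
  rw [phaseApprox_eq, mul_pow, hFun_natCast, ofReal_pow, mul_assoc]

lemma mul_one_sub_div_le {δ : ℝ} (hδ : 0 < δ) (r : ℝ) :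
    r * (1 - r ^ 2 / (r ^ 2 + δ ^ 2)) ≤ δ / 2 := by
  have hd : 0 < r ^ 2 + δ ^ 2 := by positivity
  rw [one_sub_div hd.ne', add_sub_cancel_left, mul_div_assoc', div_le_div_iff₀ hd two_pos]
  nlinarith [mul_nonneg hδ.le (sq_nonneg (r - δ))]

lemma norm_sub_phaseApprox_mul_conj_le {δ : ℝ} (hδ : 0 < δ) (ζ : ℂ) :
    ‖ζ - phaseApprox δ ζ * conj ζ‖ ≤ δ / 2 := by
  set ρ := ‖ζ‖ ^ 2 / (‖ζ‖ ^ 2 + δ ^ 2)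
  have hρ : ρ ≤ 1 := div_le_one_of_le₀ (le_add_of_nonneg_right (sq_nonneg δ)) (by positivity)
  rw [phaseApprox_mul_conj, ← one_sub_mul, norm_mul, ← ofReal_one, ← ofReal_sub, norm_real,
    Real.norm_of_nonneg (sub_nonneg.mpr hρ), mul_comm]
  exact mul_one_sub_div_le hδ ‖ζ‖

lemma norm_hFun_sub_phaseApprox_pow_mul_le {δ : ℝ} (hδ : 0 < δ) (m : ℕ) (ζ : ℂ) :
    ‖hFun m ζ - phaseApprox δ ζ ^ m * ζ‖ ≤ m * (δ / 2) := by
  set ρ := ‖ζ‖ ^ 2 / (‖ζ‖ ^ 2 + δ ^ 2)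
  have hρ0 : 0 ≤ ρ := by positivity
  have hρ : ρ ≤ 1 := div_le_one_of_le₀ (le_add_of_nonneg_right (sq_nonneg δ)) (by positivity)
  have hbern : 1 - ρ ^ m ≤ m * (1 - ρ) := by
    have := one_add_mul_le_pow (by linarith : -2 ≤ ρ - 1) m
    rw [add_sub_cancel] at this
    linarith
  rw [phaseApprox_pow_mul, ← one_sub_mul, norm_mul, ← ofReal_one, ← ofReal_sub, norm_real,
    Real.norm_of_nonneg (sub_nonneg.mpr (pow_le_one₀ hρ0 hρ)), norm_hFun]
  calc (1 - ρ ^ m) * ‖ζ‖ ≤ m * (‖ζ‖ * (1 - ρ)) := by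
        nlinarith [norm_nonneg ζ]
    _ ≤ m * (δ / 2) := by gcongr; exact mul_one_sub_div_le hδ ‖ζ‖

section CStarAlgebra

variable {A : Type*} [CStarAlgebra A]

lemma norm_cfc_sub_cfc_le {f g : ℂ → ℂ} (hf : Continuous f) (hg : Continuous g) {c : ℝ}
    (h : ∀ ζ, ‖f ζ - g ζ‖ ≤ c) (a : A) : ‖cfc f a - cfc g a‖ ≤ c := by
  rw [← cfc_sub f g a]
  exact norm_cfc_le ((norm_nonneg _).trans (h 0)) fun ζ _ => h ζ

lemma norm_cfc_hFun_natCast_sub_le_add (m : ℕ) (a b : A) [IsStarNormal a] [IsStarNormal b]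
    {δ : ℝ} (hδ : 0 < δ) :
    ‖cfc (hFun m) a - cfc (hFun m) b‖ ≤ (2 * m + 1) * ‖a - b‖ + 2 * m * δ := by
  have hφ := continuous_phaseApprox hδ.ne'
  set g : ℂ → ℂ := fun ζ => phaseApprox δ ζ ^ m * ζ
  set u := cfc (phaseApprox δ) a
  set v := cfc (phaseApprox δ) b
  have hu : ‖u‖ ≤ 1 := norm_cfc_le zero_le_one fun ζ _ => norm_phaseApprox_le δ ζ
  have hv : ‖v‖ ≤ 1 := norm_cfc_le zero_le_one fun ζ _ => norm_phaseApprox_le δ ζ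
  have hua : u ^ m * a = cfc g a := by
    rw [cfc_mul _ _ a, cfc_pow _ _ a, cfc_id' ℂ a]
  have hvb : b * v ^ m = cfc g b := by
    rw [show g = fun ζ => ζ * phaseApprox δ ζ ^ m from funext fun ζ => mul_comm _ _,
      cfc_mul _ _ b, cfc_pow _ _ b, cfc_id' ℂ b]
  have hua' : a - u * star a = cfc (fun ζ => ζ - phaseApprox δ ζ * star ζ) a := by
    rw [cfc_sub _ _ a, cfc_mul _ _ a, cfc_id' ℂ a, cfc_star_id a]
  have hvb' : b - star b * v = cfc (fun ζ => ζ - phaseApprox δ ζ * star ζ) b := by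
    rw [show (fun ζ => ζ - phaseApprox δ ζ * star ζ) = fun ζ => ζ - star ζ * phaseApprox δ ζ from
      funext fun ζ => by ring, cfc_sub _ _ b, cfc_mul _ _ b, cfc_id' ℂ b, cfc_star_id b]
  have hP : ∀ c : A, ‖cfc (fun ζ => ζ - phaseApprox δ ζ * star ζ) c‖ ≤ δ / 2 := fun c =>
    norm_cfc_le (by positivity) fun ζ _ => norm_sub_phaseApprox_mul_conj_le hδ ζ
  have hg : ∀ c : A, ‖cfc (hFun m) c - cfc g c‖ ≤ m * (δ / 2) :=
    norm_cfc_sub_cfc_le (continuous_hFun m) (by fun_prop)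
      (norm_hFun_sub_phaseApprox_pow_mul_le hδ m)
  have hrec := norm_pow_mul_sub_mul_pow_le hu hv a b m
  rw [hua, hvb, hua', hvb'] at hrec
  calc ‖cfc (hFun m) a - cfc (hFun m) b‖
      ≤ ‖cfc (hFun m) a - cfc g a‖ + ‖cfc g a - cfc g b‖ + ‖cfc g b - cfc (hFun m) b‖ := by
        simpa only [dist_eq_norm] using
          dist_triangle4 (cfc (hFun m) a) (cfc g a) (cfc g b) (cfc (hFun m) b)
    _ ≤ m * (δ / 2) + ((2 * m + 1) * ‖a - b‖ + m * (δ / 2 + δ / 2)) + m * (δ / 2) := by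
        gcongr
        · exact hg a
        · exact hrec.trans (by gcongr <;> exact hP _)
        · rw [norm_sub_rev]; exact hg b
    _ = (2 * m + 1) * ‖a - b‖ + 2 * m * δ := by ring

lemma norm_cfc_hFun_natCast_sub_le (m : ℕ) (a b : A) [IsStarNormal a] [IsStarNormal b] :
    ‖cfc (hFun m) a - cfc (hFun m) b‖ ≤ (2 * m + 1) * ‖a - b‖ := by
  refine le_of_forall_pos_le_add fun η hη => ?_
  refine (norm_cfc_hFun_natCast_sub_le_add m a b (by positivity : 0 < η / (2 * m + 1))).trans ?_
  gcongr
  rw [mul_div_assoc']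
  exact div_le_of_le_mul₀ (by positivity) hη.le (by linarith)

lemma norm_cfc_hFun_sub_le (n : ℤ) (a b : A) [IsStarNormal a] [IsStarNormal b] :
    ‖cfc (hFun n) a - cfc (hFun n) b‖ ≤ |2 * (n : ℝ) + 1| * ‖a - b‖ := by
  rcases n with m | m
  · rw [Int.ofNat_eq_natCast, Int.cast_natCast, abs_of_nonneg (by positivity)]
    exact norm_cfc_hFun_natCast_sub_le m a b
  · have hm : Int.negSucc m = -(m : ℤ) - 1 := by omega
    have hconj : hFun (Int.negSucc m) = fun ζ => star (hFun m ζ) :=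
      funext fun ζ => hm ▸ hFun_neg_sub_one m ζ
    rw [hm, show |2 * ((-(m : ℤ) - 1 : ℤ) : ℝ) + 1| = 2 * m + 1 by
        push_cast; rw [abs_of_nonpos (by linarith)]; ring,
      ← hm, hconj, cfc_star, cfc_star, ← star_sub, norm_star]
    exact norm_cfc_hFun_natCast_sub_le m a b

end CStarAlgebra

lemma norm_hFun_sub_le (n : ℤ) (ζ₁ ζ₂ : ℂ) :
    ‖hFun n ζ₁ - hFun n ζ₂‖ ≤ |2 * (n : ℝ) + 1| * ‖ζ₁ - ζ₂‖ := by
  have hcfc : ∀ ζ : ℂ, cfc (hFun n) ζ = hFun n ζ := fun ζ => by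
    simpa using cfc_algebraMap (A := ℂ) ζ (hFun n)
  simpa only [hcfc] using norm_cfc_hFun_sub_le n ζ₁ ζ₂

lemma norm_deriv_le_of_norm_sub_le {𝕜 E : Type*} [NontriviallyNormedField 𝕜]
    [NormedAddCommGroup E] [NormedSpace 𝕜 E] {f g : 𝕜 → E} {f' g' : E} {x : 𝕜} {C : ℝ}
    (hf : HasDerivAt f f' x) (hg : HasDerivAt g g' x) (h : ∀ t, ‖g t - g x‖ ≤ C * ‖f t - f x‖) :
    ‖g'‖ ≤ C * ‖f'‖ := by
  refine le_of_tendsto_of_tendsto' (hasDerivAt_iff_tendsto_slope.mp hg).norm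
    ((hasDerivAt_iff_tendsto_slope.mp hf).norm.const_mul C) fun t => ?_
  rw [slope_def_module, slope_def_module, norm_smul, norm_smul, mul_left_comm]
  exact mul_le_mul_of_nonneg_left (h t) (norm_nonneg _)

lemma hasDerivAt_exp_mul_I (c : ℝ) :
    HasDerivAt (fun t : ℝ => exp ((c * t : ℝ) * I)) (c * I) 0 := by
  have h : HasDerivAt (fun t : ℝ => ((c * t : ℝ) : ℂ) * I) (c * I) 0 := by
    simpa using ((hasDerivAt_id (0 : ℝ)).const_mul c).ofReal_comp.mul_const I
  simpa using h.cexp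

lemma abs_two_mul_add_one_le_of_lipschitz (n : ℤ) {C : ℝ}
    (h : ∀ ζ₁ ζ₂ : ℂ, ‖hFun n ζ₁ - hFun n ζ₂‖ ≤ C * ‖ζ₁ - ζ₂‖) : |2 * (n : ℝ) + 1| ≤ C := by
  have key := norm_deriv_le_of_norm_sub_le (hasDerivAt_exp_mul_I 1)
    (hasDerivAt_exp_mul_I (2 * n + 1)) fun t => by
      simpa [hFun_exp_mul_I, hFun_one] using h (exp (t * I)) 1
  simpa only [norm_mul, norm_I, mul_one, norm_real, Real.norm_eq_abs, abs_one] using key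

lemma fderiv_zero_eq_of_map_smul {𝕜 E F : Type*} [NontriviallyNormedField 𝕜]
    [NormedAddCommGroup E] [NormedSpace 𝕜 E] [NormedAddCommGroup F] [NormedSpace 𝕜 F]
    {f : E → F} (hf : ∀ (t : 𝕜) x, f (t • x) = t • f x) (hd : DifferentiableAt 𝕜 f 0) :
    ⇑(fderiv 𝕜 f 0) = f := by
  funext x
  have hline : HasDerivAt (fun t : 𝕜 => t • x) x 0 := by
    simpa using (hasDerivAt_id (0 : 𝕜)).smul_const x
  have hd' : HasFDerivAt f (fderiv 𝕜 f 0) ((fun t : 𝕜 => t • x) 0) := by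
    simpa using hd.hasFDerivAt
  have hcomp : HasDerivAt (fun t : 𝕜 => f (t • x)) (fderiv 𝕜 f 0 x) 0 :=
    hd'.comp_hasDerivAt 0 hline
  have hhom : HasDerivAt (fun t : 𝕜 => f (t • x)) (f x) 0 := by
    simpa [hf] using (hasDerivAt_id (0 : 𝕜)).smul_const (f x)
  exact hcomp.unique hhom

lemma cos_eq_of_differentiableAt_hFun (n : ℤ) (hd : DifferentiableAt ℝ (hFun n) 0) (θ : ℝ) :
    Real.cos ((2 * n + 1) * θ) = Real.cos θ := by
  have hlin := fderiv_zero_eq_of_map_smul (hFun_real_smul n) hd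
  have hcirc : ∀ x : ℝ, exp (x * I) + exp ((-x : ℝ) * I) = ((2 * Real.cos x : ℝ) : ℂ) :=
    fun x => by push_cast; rw [two_cos, neg_mul]
  suffices 2 * Real.cos ((2 * n + 1) * θ) = 2 * Real.cos θ by linarith
  apply ofReal_injective
  calc ((2 * Real.cos ((2 * n + 1) * θ) : ℝ) : ℂ)
      = hFun n (exp (θ * I)) + hFun n (exp ((-θ : ℝ) * I)) := by
        rw [hFun_exp_mul_I, hFun_exp_mul_I, mul_neg, hcirc]
    _ = hFun n (exp (θ * I) + exp ((-θ : ℝ) * I)) := by rw [← hlin, map_add]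
    _ = (2 * Real.cos θ : ℝ) • hFun n 1 := by rw [hcirc, ← hFun_real_smul, real_smul, mul_one]
    _ = (2 * Real.cos θ : ℝ) := by rw [hFun_one, real_smul, mul_one]

lemma not_differentiableAt_hFun (n : ℤ) (h0 : n ≠ 0) (h1 : n ≠ -1) :
    ¬ DifferentiableAt ℝ (hFun n) 0 := by
  intro hd
  have hk : (3 : ℝ) ≤ |2 * (n : ℝ) + 1| := by
    have : (3 : ℤ) ≤ |2 * n + 1| := by
      rcases abs_cases (2 * n + 1) with ⟨h, _⟩ | ⟨h, _⟩ <;> omega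
    exact_mod_cast this
  have hθ : |Real.pi / (2 * n + 1)| < Real.pi / 2 := by
    rw [abs_div, abs_of_pos Real.pi_pos,
      div_lt_div_iff_of_pos_left Real.pi_pos (by linarith) two_pos]
    linarith
  have hcos := Real.cos_pos_of_mem_Ioo (abs_lt.mp hθ)
  have key := cos_eq_of_differentiableAt_hFun n hd (Real.pi / (2 * n + 1))
  rw [mul_div_cancel₀ _ (abs_pos.mp (by linarith)), Real.cos_pi] at key
  linarith

/-- Theorem 3.5 (Theorem `hn`): `h_n` is operator Lipschitz with constant `|2n+1|`,
its best Lipschitz constant equals `|2n+1|`, and for `n ∉ {0, -1}` it is not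
(real-)differentiable at the origin. -/
theorem stmt_3 (n : ℤ) :
    (∀ (H : Type) [NormedAddCommGroup H] [InnerProductSpace ℂ H] [CompleteSpace H]
      (N₁ N₂ : H →L[ℂ] H), IsStarNormal N₁ → IsStarNormal N₂ →
      ‖cfc (hFun n) N₁ - cfc (hFun n) N₂‖ ≤ |2 * (n : ℝ) + 1| * ‖N₁ - N₂‖)
    ∧ (∀ ζ₁ ζ₂ : ℂ,
        ‖hFun n ζ₁ - hFun n ζ₂‖ ≤ |2 * (n : ℝ) + 1| * ‖ζ₁ - ζ₂‖)
    ∧ (∀ C : ℝ,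
        (∀ ζ₁ ζ₂ : ℂ, ‖hFun n ζ₁ - hFun n ζ₂‖ ≤ C * ‖ζ₁ - ζ₂‖) →
        |2 * (n : ℝ) + 1| ≤ C)
    ∧ (n ≠ 0 → n ≠ -1 → ¬ DifferentiableAt ℝ (hFun n) 0) :=
  ⟨fun _ _ _ _ N₁ N₂ _ _ => norm_cfc_hFun_sub_le n N₁ N₂, norm_hFun_sub_le n,
    fun _ hC => abs_two_mul_add_one_le_of_lipschitz n hC, not_differentiableAt_hFun n⟩
end

section
/- There is a constant C > 0 with the following property: for all δ, r with 0 < δ < r < ∞ there exists a function g ∈ L¹(ℂ) such that, with h = 𝓕g its Fourier transform, one has ∫_ℂ |g| ≤ C·log(2r/δ), h(0) = 0, and h(z) = z̄/z for every z with δ ≤ |z| ≤ r. -/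
/-!
Let `χ` be a smooth bump supported in `[1/2, 2]` whose dyadic dilates `χ (t / 2 ^ k)` telescope,
so that `∑_{k < N} χ (|z| / (δ 2 ^ k)) = 1` on `δ ≤ |z| ≤ 2 ^ (N - 1) δ` and the sum vanishes near
`0`. The multiplier `χ (|z|) z̄ / z` is smooth with compact support, hence the Fourier transform of
a Schwartz function `g₀`; its dilate by `δ 2 ^ k` is the transform of an `L¹`-normalised dilate of
`g₀`, which has the same `L¹` norm. Summing `N ≲ log (2r/δ)` such dilates gives the result.
-/

open scoped ComplexConjugate
open MeasureTheory

/-- The Fourier transform `(𝓕g)(z) = ∫ g(ζ) e^{-i Re(z ζ̄)} dA(ζ)` of a function on `ℂ ≅ ℝ²`. -/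
noncomputable def planeFT (g : ℂ → ℂ) (z : ℂ) : ℂ :=
  ∫ ζ : ℂ, g ζ * Complex.exp (-Complex.I * ((z * conj ζ).re : ℂ))

open scoped FourierTransform ContDiff Topology

namespace DyadicCutoff

noncomputable def cutoff (t : ℝ) : ℝ := Real.smoothTransition (2 - t)

lemma cutoff_of_le_one {t : ℝ} (h : t ≤ 1) : cutoff t = 1 :=
  Real.smoothTransition.one_of_one_le (by linarith)

lemma cutoff_of_two_le {t : ℝ} (h : 2 ≤ t) : cutoff t = 0 :=
  Real.smoothTransition.zero_of_nonpos (by linarith)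

lemma contDiff_cutoff : ContDiff ℝ ∞ cutoff :=
  Real.smoothTransition.contDiff.comp (contDiff_const.sub contDiff_id)

noncomputable def bump (t : ℝ) : ℝ := cutoff t - cutoff (2 * t)

lemma bump_of_le_half {t : ℝ} (h : t ≤ 1 / 2) : bump t = 0 := by
  rw [bump, cutoff_of_le_one (by linarith), cutoff_of_le_one (by linarith), sub_self]

lemma bump_of_two_le {t : ℝ} (h : 2 ≤ t) : bump t = 0 := by
  rw [bump, cutoff_of_two_le h, cutoff_of_two_le (by linarith), sub_self]

lemma contDiff_bump : ContDiff ℝ ∞ bump :=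
  contDiff_cutoff.sub (contDiff_cutoff.comp (contDiff_const.mul contDiff_id))

lemma sum_bump_div_two_pow (t : ℝ) (N : ℕ) :
    ∑ k ∈ Finset.range N, bump (t / 2 ^ k) = cutoff (2 * t / 2 ^ N) - cutoff (2 * t) := by
  have telescope (k : ℕ) :
      bump (t / 2 ^ k) = cutoff (2 * t / 2 ^ (k + 1)) - cutoff (2 * t / 2 ^ k) := by
    rw [bump, pow_succ]; ring_nf
  simp_rw [telescope, Finset.sum_range_sub (fun k => cutoff (2 * t / 2 ^ k)), pow_zero, div_one]

lemma sum_bump_div_two_pow_eq_one {t : ℝ} {N : ℕ} (h₁ : 1 ≤ t) (h₂ : 2 * t ≤ 2 ^ N) :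
    ∑ k ∈ Finset.range N, bump (t / 2 ^ k) = 1 := by
  rw [sum_bump_div_two_pow, cutoff_of_le_one, cutoff_of_two_le (by linarith), sub_zero]
  rwa [div_le_one (by positivity)]

noncomputable def angularBump (z : ℂ) : ℂ := bump ‖z‖ * (conj z / z)

lemma angularBump_of_norm_le_half {z : ℂ} (h : ‖z‖ ≤ 1 / 2) : angularBump z = 0 := by
  rw [angularBump, bump_of_le_half h, Complex.ofReal_zero, zero_mul]

lemma hasCompactSupport_angularBump : HasCompactSupport angularBump := by
  refine HasCompactSupport.intro (isCompact_closedBall 0 2) fun z hz => ?_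
  rw [Metric.mem_closedBall, dist_zero_right, not_le] at hz
  rw [angularBump, bump_of_two_le hz.le, Complex.ofReal_zero, zero_mul]

lemma contDiff_angularBump : ContDiff ℝ ∞ angularBump := by
  refine contDiff_iff_contDiffAt.2 fun z => ?_
  rcases lt_or_ge ‖z‖ (1 / 2) with hz | hz
  · have hzero : angularBump =ᶠ[𝓝 z] fun _ => 0 := by
      filter_upwards [continuous_norm.continuousAt.eventually_lt continuousAt_const hz] with w hw
      exact angularBump_of_norm_le_half hw.le
    exact contDiffAt_const.congr_of_eventuallyEq hzero
  · have hz0 : z ≠ 0 := norm_pos_iff.1 (by linarith)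
    have hbump : ContDiffAt ℝ ∞ (fun w : ℂ => (bump ‖w‖ : ℂ)) z :=
      Complex.ofRealCLM.contDiff.contDiffAt.comp z
        (contDiff_bump.contDiffAt.comp z (contDiffAt_norm ℝ hz0))
    exact hbump.mul (Complex.conjCLE.contDiff.contDiffAt.mul (contDiffAt_id.inv hz0))

lemma angularBump_inv_smul {c : ℝ} (hc : 0 < c) (z : ℂ) :
    angularBump (c⁻¹ • z) = bump (‖z‖ / c) * (conj z / z) := by
  have hc' : ((c⁻¹ : ℝ) : ℂ) ≠ 0 := by exact_mod_cast (inv_pos.2 hc).ne'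
  rw [angularBump, norm_smul, Real.norm_of_nonneg (inv_nonneg.2 hc.le), inv_mul_eq_div,
    Complex.real_smul, map_mul, Complex.conj_ofReal, mul_div_mul_left _ _ hc']

end DyadicCutoff

lemma exists_two_mul_le_two_pow_and_mul_log_two_le {x : ℝ} (hx : 1 ≤ x) :
    ∃ N : ℕ, 2 * x ≤ 2 ^ N ∧ N * Real.log 2 ≤ 2 * Real.log (2 * x) := by
  obtain ⟨n, hn_le, hn_lt⟩ := exists_nat_pow_near hx one_lt_two
  refine ⟨n + 2, by rw [pow_succ]; linarith, ?_⟩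
  have h : (2 : ℝ) ^ (n + 2) ≤ (2 * x) ^ 2 := by rw [pow_add]; nlinarith
  have := Real.log_le_log (by positivity) h
  rw [Real.log_pow, Real.log_pow] at this
  exact_mod_cast this

lemma integral_norm_finset_sum_le {α E ι : Type*} [MeasurableSpace α] {μ : Measure α}
    [NormedAddCommGroup E] (t : Finset ι) {f : ι → α → E} (hf : ∀ i ∈ t, Integrable (f i) μ) :
    ∫ x, ‖∑ i ∈ t, f i x‖ ∂μ ≤ ∑ i ∈ t, ∫ x, ‖f i x‖ ∂μ := by
  rw [← integral_finsetSum t fun i hi => (hf i hi).norm]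
  exact integral_mono_of_nonneg (.of_forall fun x => norm_nonneg _)
    (integrable_finsetSum t fun i hi => (hf i hi).norm) (.of_forall fun x => norm_sum_le _ _)

section Dilation

variable {V E : Type*} [NormedAddCommGroup V] [NormedSpace ℝ V] [NormedAddCommGroup E]
  [NormedSpace ℝ E]

noncomputable def dilate (s : ℝ) (f : V → E) (x : V) : E := s ^ Module.finrank ℝ V • f (s • x)

lemma norm_dilate (f : V → E) {s : ℝ} (hs : 0 ≤ s) (x : V) :
    ‖dilate s f x‖ = dilate s (fun y => ‖f y‖) x := by
  rw [dilate, dilate, norm_smul, Real.norm_eq_abs, abs_of_nonneg (pow_nonneg hs _), smul_eq_mul]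

variable [MeasurableSpace V] [BorelSpace V] [FiniteDimensional ℝ V] (μ : Measure V)
  [μ.IsAddHaarMeasure]

lemma integral_dilate (f : V → E) {s : ℝ} (hs : 0 < s) :
    ∫ x, dilate s f x ∂μ = ∫ x, f x ∂μ := by
  simp only [dilate]
  rw [integral_smul, Measure.integral_comp_smul_of_nonneg μ f s (hR := hs.le),
    smul_inv_smul₀ (pow_ne_zero _ hs.ne')]

lemma integral_norm_dilate (f : V → E) {s : ℝ} (hs : 0 < s) :
    ∫ x, ‖dilate s f x‖ ∂μ = ∫ x, ‖f x‖ ∂μ := by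
  simp_rw [norm_dilate f hs.le]
  exact integral_dilate μ _ hs

variable {μ} in
lemma MeasureTheory.Integrable.dilate {f : V → E} (hf : Integrable f μ) {s : ℝ} (hs : s ≠ 0) :
    Integrable (dilate s f) μ :=
  (hf.comp_smul hs).smul _

end Dilation

section Fourier

open Real
open scoped RealInnerProductSpace

variable {V E : Type*} [NormedAddCommGroup V] [InnerProductSpace ℝ V] [MeasurableSpace V]
  [BorelSpace V] [FiniteDimensional ℝ V] [NormedAddCommGroup E] [NormedSpace ℂ E]

lemma Real.fourier_dilate (f : V → E) {s : ℝ} (hs : 0 < s) (w : V) :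
    𝓕 (dilate s f) w = 𝓕 f (s⁻¹ • w) := by
  calc 𝓕 (dilate s f) w = ∫ v, dilate s (fun u => 𝐞 (-⟪u, s⁻¹ • w⟫) • f u) v := by
        simp only [fourier_eq, dilate, inner_smul_left, inner_smul_right, RCLike.conj_to_real]
        congr 1 with v
        rw [smul_comm, inv_mul_cancel_left₀ hs.ne']
    _ = 𝓕 f (s⁻¹ • w) := integral_dilate volume _ hs

lemma Real.fourier_finset_sum {ι : Type*} (t : Finset ι) {f : ι → V → E}
    (hf : ∀ i ∈ t, Integrable (f i)) (w : V) :
    𝓕 (fun v => ∑ i ∈ t, f i v) w = ∑ i ∈ t, 𝓕 (f i) w := by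
  simp only [fourier_eq, Finset.smul_sum]
  exact integral_finsetSum t fun i hi => (fourierIntegral_convergent_iff w).2 (hf i hi)

end Fourier

section PlaneFourier

open Real

lemma planeFT_eq_fourier (g : ℂ → ℂ) (z : ℂ) : planeFT g z = 𝓕 g ((2 * π)⁻¹ • z) := by
  rw [fourier_eq', planeFT]
  congr 1 with ζ
  rw [real_inner_smul_right, Complex.inner, smul_eq_mul, mul_comm]
  congr 2
  push_cast
  field_simp

lemma planeFT_dilate (g : ℂ → ℂ) {s : ℝ} (hs : 0 < s) (z : ℂ) :
    planeFT (dilate s g) z = planeFT g (s⁻¹ • z) := by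
  rw [planeFT_eq_fourier, planeFT_eq_fourier, fourier_dilate g hs, smul_comm]

lemma planeFT_finset_sum {ι : Type*} (t : Finset ι) {f : ι → ℂ → ℂ}
    (hf : ∀ i ∈ t, Integrable (f i)) (z : ℂ) :
    planeFT (fun ζ => ∑ i ∈ t, f i ζ) z = ∑ i ∈ t, planeFT (f i) z := by
  simp only [planeFT_eq_fourier, fourier_finset_sum t hf]

lemma exists_integrable_planeFT_eq {f : ℂ → ℂ} (hf : ContDiff ℝ ∞ f)
    (hc : HasCompactSupport f) : ∃ g : ℂ → ℂ, Integrable g ∧ ∀ z, planeFT g z = f z := by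
  have h2π : 2 * π ≠ 0 := by positivity
  let F := (hc.comp_smul h2π).toSchwartzMap (hf.comp (contDiff_const_smul (2 * π)))
  let G : SchwartzMap ℂ ℂ := 𝓕⁻ F
  refine ⟨G, G.integrable, fun z => ?_⟩
  rw [planeFT_eq_fourier, ← SchwartzMap.fourier_coe, FourierTransform.fourier_fourierInv_eq]
  exact congrArg f (smul_inv_smul₀ h2π z)

end PlaneFourier

open DyadicCutoff in
/-- Lemma 4.1 (Lemma `log0`): for `0 < δ < r` there is `h = 𝓕g` with `g ∈ L¹(ℂ)`,
`‖g‖_{L¹} ≤ C log(2r/δ)`, `h(0) = 0`, and `h(z) = z̄/z` on the annulus `δ ≤ |z| ≤ r`. -/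
theorem stmt_4 :
    ∃ C > (0 : ℝ), ∀ δ r : ℝ, 0 < δ → δ < r →
      ∃ g : ℂ → ℂ, Integrable g ∧
        (∫ ζ : ℂ, ‖g ζ‖) ≤ C * Real.log (2 * r / δ) ∧
        planeFT g 0 = 0 ∧
        (∀ z : ℂ, δ ≤ ‖z‖ → ‖z‖ ≤ r →
          planeFT g z = conj z / z) := by
  obtain ⟨g₀, hg₀, hFg₀⟩ :=
    exists_integrable_planeFT_eq contDiff_angularBump hasCompactSupport_angularBump
  set A := ∫ ζ : ℂ, ‖g₀ ζ‖
  have hlog2 : 0 < Real.log 2 := Real.log_pos one_lt_two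
  refine ⟨2 * (A + 1) / Real.log 2, by positivity, fun δ r hδ hδr => ?_⟩
  obtain ⟨N, hN, hNlog⟩ :=
    exists_two_mul_le_two_pow_and_mul_log_two_le ((one_le_div hδ).2 hδr.le)
  have hs (k : ℕ) : 0 < δ * 2 ^ k := by positivity
  have hint (k : ℕ) : Integrable (dilate (δ * 2 ^ k) g₀) := hg₀.dilate (hs k).ne'
  have hFg (z : ℂ) : planeFT (fun ζ => ∑ k ∈ Finset.range N, dilate (δ * 2 ^ k) g₀ ζ) z
      = (∑ k ∈ Finset.range N, bump (‖z‖ / δ / 2 ^ k) : ℝ) * (conj z / z) := by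
    rw [planeFT_finset_sum _ fun k _ => hint k, Complex.ofReal_sum, Finset.sum_mul]
    refine Finset.sum_congr rfl fun k _ => ?_
    rw [planeFT_dilate _ (hs k), hFg₀, angularBump_inv_smul (hs k), div_div]
  refine ⟨fun ζ => ∑ k ∈ Finset.range N, dilate (δ * 2 ^ k) g₀ ζ,
    integrable_finsetSum _ fun k _ => hint k, ?_, by simp [hFg], fun z hz₁ hz₂ => ?_⟩
  · calc ∫ ζ, ‖∑ k ∈ Finset.range N, dilate (δ * 2 ^ k) g₀ ζ‖
        ≤ ∑ k ∈ Finset.range N, ∫ ζ, ‖dilate (δ * 2 ^ k) g₀ ζ‖ :=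
          integral_norm_finset_sum_le _ fun k _ => hint k
      _ = N * A := by
          rw [Finset.sum_congr rfl fun k _ => integral_norm_dilate volume g₀ (hs k),
            Finset.sum_const, Finset.card_range, nsmul_eq_mul]
      _ ≤ (A + 1) * (N * Real.log 2) / Real.log 2 := by
          rw [mul_div_assoc, mul_div_cancel_right₀ _ hlog2.ne']; nlinarith
      _ ≤ (A + 1) * (2 * Real.log (2 * (r / δ))) / Real.log 2 := by gcongr
      _ = 2 * (A + 1) / Real.log 2 * Real.log (2 * r / δ) := by ring_nf
  · rw [hFg, sum_bump_div_two_pow_eq_one, Complex.ofReal_one, one_mul]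
    · exact (one_le_div hδ).2 hz₁
    · exact le_trans (by gcongr) hN
end

section
/- Let ℤ[i] = {a + bi : a, b ∈ ℤ} be the Gaussian integers. There exists a constant c > 0 such that for every real r ≥ 3 the following holds: with S = {m ∈ ℤ[i] : |m| ≤ r} and the matrix entries b(m, n) = 1/|m − n|² for m ≠ n in S and b(m, m) = 0, the operator norm of this matrix on ℓ²(S) is at least c·log r; equivalently, there exists u : S → ℂ with ∑_{m ∈ S} |u(m)|² = 1 and ∑_{m,n ∈ S} b(m, n) u(n) conj(u(m)) ≥ c·log r. -/
/-!
Take for `u` the normalised indicator of the lattice square `[-K, K]²`, `K = ⌊r/2⌋`, which lies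
in the disc of radius `r`. The quadratic form is then `(2K+1)⁻²` times the sum of `1/|m - n|²`
over pairs of distinct points of the square. Pairing each of the `(K+1)²` points `m` of the
lower-left quarter with the `K²` offsets `d ∈ [1, K]²` gives distinct pairs `(m, m + d)`, so this
sum is at least `(K+1)² ∑_{d ∈ [1,K]²} 1/|d|²`. Keeping only `b ≤ a` in `∑_{a,b} 1/(a²+b²)`
leaves `∑_a 1/(2a)`, half a harmonic sum, hence at least `log (K+1) / 2 ≥ log r / 4`. Since
`(K+1)² ≥ (2K+1)² / 4`, the constant `c = 1/16` works.
-/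

open scoped ComplexConjugate

/-- The Gaussian integer `a + b i` attached to `(a, b) ∈ ℤ × ℤ`, as a complex number. -/
noncomputable def gaussInt (p : ℤ × ℤ) : ℂ := (p.1 : ℂ) + (p.2 : ℂ) * Complex.I

open Finset

variable {α : Type*}

lemma finsum_indicator_finset {M : Type*} [AddCommMonoid M] (T : Finset α) (f : α → M) :
    ∑ᶠ a, (T : Set α).indicator f a = ∑ a ∈ T, f a := by
  rw [← finsum_mem_def, finsum_mem_coe_finset]

lemma finsum_finsum_eq_sum_sum {β M : Type*} [AddCommMonoid M] (S : Finset α) (T : Finset β)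
    (f : α → β → M) (hf : ∀ m n, f m n ≠ 0 → m ∈ S ∧ n ∈ T) :
    ∑ᶠ m, ∑ᶠ n, f m n = ∑ m ∈ S, ∑ n ∈ T, f m n := by
  have hinner m : ∑ᶠ n, f m n = ∑ n ∈ T, f m n :=
    finsum_eq_sum_of_support_subset _ fun n hn ↦ (hf m n hn).2
  simp_rw [hinner]
  refine finsum_eq_sum_of_support_subset _ fun m hm ↦ ?_
  obtain ⟨n, -, hn⟩ := exists_ne_zero_of_sum_ne_zero hm
  exact (hf m n hn).1

lemma finsum_norm_sq_indicator_const (T : Finset α) (c : ℂ) :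
    ∑ᶠ m, ‖(T : Set α).indicator (fun _ ↦ c) m‖ ^ 2 = #T * ‖c‖ ^ 2 := by
  have h m : ‖(T : Set α).indicator (fun _ ↦ c) m‖ ^ 2 =
      (T : Set α).indicator (fun _ ↦ ‖c‖ ^ 2) m := by
    by_cases hm : m ∈ T <;> simp [hm]
  simp_rw [h, finsum_indicator_finset, sum_const, nsmul_eq_mul]

lemma finsum_finsum_mul_re_indicator_const (k : α → α → ℝ) (T : Finset α) (c : ℝ) :
    ∑ᶠ m, ∑ᶠ n, k m n * ((T : Set α).indicator (fun _ ↦ (c : ℂ)) n *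
      conj ((T : Set α).indicator (fun _ ↦ (c : ℂ)) m)).re =
      c ^ 2 * ∑ m ∈ T, ∑ n ∈ T, k m n := by
  rw [finsum_finsum_eq_sum_sum T T]
  · simp_rw [mul_sum]
    refine sum_congr rfl fun m hm ↦ sum_congr rfl fun n hn ↦ ?_
    simp only [SetLike.mem_coe, Set.indicator_of_mem, hm, hn, Complex.conj_ofReal,
      ← Complex.ofReal_mul, Complex.ofReal_re]
    ring
  · intro m n h
    by_cases hm : m ∈ T <;> by_cases hn : n ∈ T <;> simp_all

lemma sum_sum_add_le_sum_sum {G ι M : Type*} [Add G] [IsLeftCancelAdd G] [AddCommMonoid M]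
    [PartialOrder M] [IsOrderedAddMonoid M] (w : G → G → M) (T A : Finset G) (D : Finset ι)
    (f : ι ↪ G) (hw : ∀ m ∈ T, ∀ n ∈ T, 0 ≤ w m n) (hA : A ⊆ T)
    (hAD : ∀ a ∈ A, ∀ i ∈ D, a + f i ∈ T) :
    ∑ a ∈ A, ∑ i ∈ D, w a (a + f i) ≤ ∑ m ∈ T, ∑ n ∈ T, w m n := by
  calc ∑ a ∈ A, ∑ i ∈ D, w a (a + f i)
      = ∑ a ∈ A, ∑ n ∈ D.map (f.trans (addLeftEmbedding a)), w a n := by simp [sum_map]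
    _ ≤ ∑ a ∈ A, ∑ n ∈ T, w a n := by
      refine sum_le_sum fun a ha ↦ sum_le_sum_of_subset_of_nonneg ?_ fun n hn _ ↦ hw a (hA ha) n hn
      intro n hn
      obtain ⟨i, hi, rfl⟩ := mem_map.1 hn
      exact hAD a ha i hi
    _ ≤ ∑ m ∈ T, ∑ n ∈ T, w m n :=
      sum_le_sum_of_subset_of_nonneg hA fun m hm _ ↦ sum_nonneg (hw m hm)

lemma inv_two_mul_le_sum_inv_sq_add_sq {a K : ℕ} (ha : 1 ≤ a) (haK : a ≤ K) :
    (2 * a : ℝ)⁻¹ ≤ ∑ b ∈ Icc 1 K, ((a : ℝ) ^ 2 + (b : ℝ) ^ 2)⁻¹ := by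
  have ha' : (1 : ℝ) ≤ a := by exact_mod_cast ha
  calc (2 * a : ℝ)⁻¹ = #(Icc 1 a) • (2 * (a : ℝ) ^ 2)⁻¹ := by
        rw [Nat.card_Icc, nsmul_eq_mul, Nat.add_sub_cancel]
        field_simp
    _ ≤ ∑ b ∈ Icc 1 a, ((a : ℝ) ^ 2 + (b : ℝ) ^ 2)⁻¹ := by
        refine card_nsmul_le_sum _ _ _ fun b hb ↦ ?_
        have hba : (b : ℝ) ≤ a := by exact_mod_cast (mem_Icc.1 hb).2
        have hb : (1 : ℝ) ≤ b := by exact_mod_cast (mem_Icc.1 hb).1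
        exact inv_anti₀ (by positivity) (by nlinarith)
    _ ≤ ∑ b ∈ Icc 1 K, ((a : ℝ) ^ 2 + (b : ℝ) ^ 2)⁻¹ :=
        sum_le_sum_of_subset_of_nonneg (Icc_subset_Icc le_rfl haK) fun _ _ _ ↦ by positivity

lemma log_add_one_div_two_le_sum_sum_inv_sq_add_sq (K : ℕ) :
    Real.log (K + 1) / 2 ≤ ∑ a ∈ Icc 1 K, ∑ b ∈ Icc 1 K, ((a : ℝ) ^ 2 + (b : ℝ) ^ 2)⁻¹ := by
  have hharm : (harmonic K : ℝ) / 2 = ∑ a ∈ Icc 1 K, (2 * a : ℝ)⁻¹ := by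
    rw [harmonic_eq_sum_Icc]
    push_cast
    rw [sum_div]
    exact sum_congr rfl fun a _ ↦ by ring
  calc Real.log (K + 1) / 2 ≤ (harmonic K : ℝ) / 2 := by
        gcongr; exact_mod_cast log_add_one_le_harmonic K
    _ ≤ _ := hharm ▸ sum_le_sum fun a ha ↦
        inv_two_mul_le_sum_inv_sq_add_sq (mem_Icc.1 ha).1 (mem_Icc.1 ha).2

lemma gaussInt_sub (p q : ℤ × ℤ) : gaussInt p - gaussInt q = gaussInt (p - q) := by
  simp only [gaussInt, Prod.fst_sub, Prod.snd_sub, Int.cast_sub]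
  ring

lemma norm_gaussInt_sq (p : ℤ × ℤ) : ‖gaussInt p‖ ^ 2 = (p.1 : ℝ) ^ 2 + (p.2 : ℝ) ^ 2 := by
  rw [Complex.sq_norm, Complex.normSq_apply]
  simp [gaussInt, sq]

noncomputable def gaussKernel (m n : ℤ × ℤ) : ℝ :=
  if m = n then 0 else (‖gaussInt m - gaussInt n‖ ^ 2)⁻¹

lemma gaussKernel_nonneg (m n : ℤ × ℤ) : 0 ≤ gaussKernel m n := by
  unfold gaussKernel; split_ifs <;> positivity

lemma gaussKernel_add {d : ℤ × ℤ} (hd : d ≠ 0) (m : ℤ × ℤ) :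
    gaussKernel m (m + d) = ((d.1 : ℝ) ^ 2 + (d.2 : ℝ) ^ 2)⁻¹ := by
  rw [gaussKernel, if_neg (by simpa using hd), gaussInt_sub, norm_gaussInt_sq]
  simp

noncomputable def centeredSquare (K : ℕ) : Finset (ℤ × ℤ) := Icc (-K : ℤ) K ×ˢ Icc (-K : ℤ) K

lemma card_centeredSquare (K : ℕ) : #(centeredSquare K) = (2 * K + 1) ^ 2 := by
  rw [centeredSquare, card_product, Int.card_Icc,
    show ((K : ℤ) + 1 - -K).toNat = 2 * K + 1 by omega, sq]

lemma norm_gaussInt_sq_le_of_mem_centeredSquare {K : ℕ} {p : ℤ × ℤ}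
    (hp : p ∈ centeredSquare K) : ‖gaussInt p‖ ^ 2 ≤ 2 * (K : ℝ) ^ 2 := by
  simp only [centeredSquare, mem_product, mem_Icc] at hp
  have h1 : |(p.1 : ℝ)| ≤ K := abs_le.2 ⟨by exact_mod_cast hp.1.1, by exact_mod_cast hp.1.2⟩
  have h2 : |(p.2 : ℝ)| ≤ K := abs_le.2 ⟨by exact_mod_cast hp.2.1, by exact_mod_cast hp.2.2⟩
  rw [norm_gaussInt_sq, ← sq_abs (p.1 : ℝ), ← sq_abs (p.2 : ℝ)]
  nlinarith [abs_nonneg (p.1 : ℝ), abs_nonneg (p.2 : ℝ)]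

lemma sum_sum_gaussKernel_centeredSquare_ge (K : ℕ) :
    (K + 1) ^ 2 * (Real.log (K + 1) / 2) ≤
      ∑ m ∈ centeredSquare K, ∑ n ∈ centeredSquare K, gaussKernel m n := by
  set A : Finset (ℤ × ℤ) := Icc (-K : ℤ) 0 ×ˢ Icc (-K : ℤ) 0
  set D : Finset (ℕ × ℕ) := Icc 1 K ×ˢ Icc 1 K
  set f : ℕ × ℕ ↪ ℤ × ℤ := Nat.castEmbedding.prodMap Nat.castEmbedding
  have hf (i : ℕ × ℕ) : f i = ((i.1 : ℤ), (i.2 : ℤ)) := rfl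
  have hcardA : (#A : ℝ) = (K + 1) ^ 2 := by
    rw [card_product, Int.card_Icc, show (0 + 1 - -(K : ℤ)).toNat = K + 1 by omega]
    push_cast
    ring
  calc (K + 1) ^ 2 * (Real.log (K + 1) / 2)
      ≤ #A * ∑ i ∈ D, ((i.1 : ℝ) ^ 2 + (i.2 : ℝ) ^ 2)⁻¹ := by
        rw [hcardA, sum_product]
        gcongr
        exact log_add_one_div_two_le_sum_sum_inv_sq_add_sq K
    _ = ∑ a ∈ A, ∑ i ∈ D, gaussKernel a (a + f i) := by
        rw [← nsmul_eq_mul, ← sum_const]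
        refine sum_congr rfl fun a _ ↦ sum_congr rfl fun i hi ↦ ?_
        have hi1 : 1 ≤ i.1 := (mem_Icc.1 (mem_product.1 hi).1).1
        rw [hf, gaussKernel_add (by simp only [ne_eq, Prod.mk_eq_zero, not_and]; omega)]
        simp
    _ ≤ ∑ m ∈ centeredSquare K, ∑ n ∈ centeredSquare K, gaussKernel m n := by
        refine sum_sum_add_le_sum_sum _ _ _ _ _ (fun m _ n _ ↦ gaussKernel_nonneg m n) ?_ ?_
        · intro a ha
          simp only [A, centeredSquare, mem_product, mem_Icc] at ha ⊢
          omega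
        · intro a ha i hi
          simp only [A, D, centeredSquare, hf, mem_product, mem_Icc, Prod.fst_add, Prod.snd_add]
            at ha hi ⊢
          omega

/-- Lemma 4.10 (Lemma `rho`): for `r ≥ 3`, the matrix `{1/|m - n|²}` (zero diagonal) indexed
by the Gaussian integers of modulus at most `r` has operator norm on `ℓ²` at least
`c log r`: there is a unit vector `u` supported there whose quadratic form is `≥ c log r`. -/
theorem stmt_9 :
    ∃ c > (0 : ℝ), ∀ r : ℝ, 3 ≤ r →
      ∃ u : ℤ × ℤ → ℂ,
        (∀ m : ℤ × ℤ, u m ≠ 0 → ‖gaussInt m‖ ≤ r) ∧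
        (∑ᶠ m : ℤ × ℤ, ‖u m‖ ^ 2) = 1 ∧
        c * Real.log r ≤ ∑ᶠ m : ℤ × ℤ, ∑ᶠ n : ℤ × ℤ,
          (if m = n then (0 : ℝ) else (‖gaussInt m - gaussInt n‖ ^ 2)⁻¹)
            * (u n * conj (u m)).re := by
  refine ⟨1 / 16, by norm_num, fun r hr ↦ ?_⟩
  set K := ⌊r / 2⌋₊
  have hKr : (K : ℝ) ≤ r / 2 := Nat.floor_le (by linarith)
  have hrK : r / 2 < K + 1 := Nat.lt_floor_add_one _
  have hK1 : (1 : ℝ) ≤ K := by exact_mod_cast Nat.le_floor (by norm_num; linarith)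
  refine ⟨(centeredSquare K : Set (ℤ × ℤ)).indicator fun _ ↦ (↑(2 * K + 1 : ℝ)⁻¹ : ℂ),
    fun m hm ↦ ?_, ?_, ?_⟩
  · have hm2 := norm_gaussInt_sq_le_of_mem_centeredSquare (Set.mem_of_indicator_ne_zero hm)
    nlinarith [norm_nonneg (gaussInt m)]
  · rw [finsum_norm_sq_indicator_const, card_centeredSquare, Complex.norm_real, Real.norm_eq_abs,
      abs_of_pos (by positivity)]
    push_cast
    field_simp
  · have hlog : Real.log r ≤ 2 * Real.log (K + 1) := by
      calc Real.log r ≤ Real.log ((K + 1) ^ 2) := Real.log_le_log (by linarith) (by nlinarith)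
        _ = 2 * Real.log (K + 1) := by rw [Real.log_pow]; norm_num
    have hfactor : 1 / 4 ≤ (2 * K + 1 : ℝ)⁻¹ ^ 2 * (K + 1) ^ 2 := by
      rw [inv_pow, inv_mul_eq_div, le_div_iff₀ (by positivity)]
      nlinarith
    have hlog0 : 0 ≤ Real.log (K + 1) := Real.log_nonneg (by linarith)
    refine le_of_le_of_eq ?_ (finsum_finsum_mul_re_indicator_const gaussKernel _ _).symm
    calc 1 / 16 * Real.log r ≤ 1 / 4 * (Real.log (K + 1) / 2) := by linarith
      _ ≤ (2 * K + 1 : ℝ)⁻¹ ^ 2 * (K + 1) ^ 2 * (Real.log (K + 1) / 2) := by gcongr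
      _ ≤ _ := by
        rw [mul_assoc]
        gcongr
        exact sum_sum_gaussKernel_centeredSquare_ge K
end
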